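/- arXiv:2512.11337 — 2 statements merged into one kernel-verified Lean document; each statement's English description precedes it below -/
import Mathlib

section
/- Let K be a number field Galois over ℚ with r the order of the torsion subgroup of K^×, and let α ∈ K^×. If β ≠ α^r is a Galois conjugate of α^r over ℚ, then β/α^r is not a root of unity. -/
/-- Let `K` be a number field Galois over `ℚ` with `r` the order of the torsion subgroup
of `Kˣ`, and let `α ∈ Kˣ`. If `β ≠ α^r` is a Galois conjugate of `α^r` over `ℚ`, then
`β/α^r` is not a root of unity. -/
theorem conj_div_pow_torsionCard_not_rootOfUnity
    (K : Type*) [Field K] [NumberField K] [IsGalois ℚ K] (α : K) (hα : α ≠ 0)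
    (σ : K ≃ₐ[ℚ] K) (β : K)
    (hβ : β = σ (α ^ Nat.card (CommGroup.torsion Kˣ)))
    (hne : β ≠ α ^ Nat.card (CommGroup.torsion Kˣ)) :
    ¬ ∃ m : ℕ, 0 < m ∧ (β / α ^ Nat.card (CommGroup.torsion Kˣ)) ^ m = 1 := by
  rintro ⟨m, hm, hmeq⟩
  set r := Nat.card (CommGroup.torsion Kˣ) with hr
  rcases Nat.eq_zero_or_pos r with h0 | hrpos
  · apply hne
    rw [hβ, h0]
    simp
  · have hσα : σ α ≠ 0 := fun h => hα (by simpa using σ.injective (by simpa using h))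
    have hδ : σ α / α ≠ 0 := div_ne_zero hσα hα
    set u : Kˣ := Units.mk0 (σ α / α) hδ with hu
    have hζ : β / α ^ r = (σ α / α) ^ r := by
      rw [hβ, map_pow, div_pow]
    have hpow : u ^ (r * m) = 1 := by
      ext
      rw [Units.val_pow_eq_pow_val, Units.val_one, hu, Units.val_mk0, pow_mul, ← hζ, hmeq]
    have hfin : IsOfFinOrder u :=
      isOfFinOrder_iff_pow_eq_one.mpr ⟨r * m, Nat.mul_pos hrpos hm, hpow⟩
    have hmem : u ∈ CommGroup.torsion Kˣ := hfin
    have : Finite (CommGroup.torsion Kˣ) := (Nat.card_ne_zero.mp hrpos.ne').2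
    have hur : (⟨u, hmem⟩ : CommGroup.torsion Kˣ) ^ r = 1 := pow_card_eq_one'
    have hur' : u ^ r = 1 := by
      have := congrArg (Subtype.val) hur
      simpa using this
    have hone : (σ α / α) ^ r = 1 := by
      have := congrArg (Units.val) hur'
      simpa [hu] using this
    apply hne
    rw [hβ, map_pow]
    rw [div_pow, div_eq_one_iff_eq (pow_ne_zero r hα)] at hone
    exact hone
end

section
/- Kronecker's theorem: if λ is a nonzero algebraic number with absolute logarithmic Weil height h(λ) = 0 and λ is an algebraic integer (equivalently, all conjugates have absolute value ≤ 1 and λ ≠ 0), then λ is a root of unity. -/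
/-- The Mahler measure of an algebraic number `x`. -/
noncomputable def mahlerMeasure (x : ℂ) : ℝ :=
  ((IsLocalization.integerNormalization (nonZeroDivisors ℤ)
      (minpoly ℚ x)).primPart.leadingCoeff.natAbs : ℝ) *
    (Multiset.map (fun z : ℂ => max 1 ‖z‖)
      (((IsLocalization.integerNormalization (nonZeroDivisors ℤ)
          (minpoly ℚ x)).primPart.map (Int.castRingHom ℂ)).roots)).prod

/-- The absolute multiplicative Weil height of an algebraic number. -/
noncomputable def weilHeight (x : ℂ) : ℝ :=
  mahlerMeasure x ^ (((minpoly ℚ x).natDegree : ℝ)⁻¹)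

/-- The absolute logarithmic Weil height `h(x) = log H(x)`. -/
noncomputable def logHeight (x : ℂ) : ℝ :=
  Real.log (weilHeight x)

open Polynomial in
/-- Pigeonhole: an algebraic number all of whose conjugates have norm at most one
is a root of unity. -/
theorem aux_pow_eq_one {K : Type*} [Field K] [NumberField K] {x : K} (hx0 : x ≠ 0)
    (hxi : IsIntegral ℤ x) (hx : ∀ φ : K →+* ℂ, ‖φ x‖ ≤ 1) :
    ∃ n : ℕ, 0 < n ∧ x ^ n = 1 := by
  have key : ∀ a b : ℕ, b < a → x ^ a = x ^ b → ∃ n : ℕ, 0 < n ∧ x ^ n = 1 := by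
    intro a b hlt h
    refine ⟨a - b, Nat.sub_pos_of_lt hlt, ?_⟩
    have hb0 : x ^ b ≠ 0 := pow_ne_zero _ hx0
    have : x ^ (a - b) * x ^ b = 1 * x ^ b := by
      rw [one_mul, ← pow_add, Nat.sub_add_cancel hlt.le, h]
    exact mul_right_cancel₀ hb0 this
  obtain ⟨a, -, b, -, habne, h⟩ :=
    @Set.Infinite.exists_ne_map_eq_of_mapsTo _ _ _ _ (x ^ · : ℕ → K) Set.infinite_univ
      (by
        intro a _
        refine ⟨hxi.pow a, fun φ => ?_⟩
        rw [map_pow, norm_pow]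
        exact pow_le_one₀ (norm_nonneg _) (hx φ))
      (NumberField.Embeddings.finite_of_norm_le K ℂ (1 : ℝ))
  rcases habne.lt_or_gt with hlt | hlt
  · exact key b a hlt h.symm
  · exact key a b hlt h

open Polynomial IntermediateField in
/-- Kronecker's theorem: if `λ` is a nonzero algebraic integer with absolute
logarithmic Weil height `h(λ) = 0`, then `λ` is a root of unity. -/
theorem kronecker_rootOfUnity
    (lam : ℂ) (h0 : lam ≠ 0) (hint : IsIntegral ℤ lam) (hh : logHeight lam = 0) :
    ∃ m : ℕ, 0 < m ∧ lam ^ m = 1 := by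
  have hqi : IsIntegral ℚ lam := hint.tower_top
  set q := minpoly ℚ lam with hq
  have hq0 : q ≠ 0 := minpoly.ne_zero hqi
  have hd : 0 < q.natDegree := minpoly.natDegree_pos hqi
  set p := IsLocalization.integerNormalization (nonZeroDivisors ℤ) q with hpdef
  have hp0 : p ≠ 0 := fun h => hq0 (IsFractionRing.integerNormalization_eq_zero_iff.mp h)
  set pp := p.primPart with hppdef
  have hpp0 : pp ≠ 0 := p.primPart_ne_zero
  set P := pp.map (Int.castRingHom ℂ) with hPdef
  have hP0 : P ≠ 0 := (Polynomial.map_ne_zero_iff Int.cast_injective).mpr hpp0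
  -- Mahler measure equals 1
  set S := Multiset.map (fun z : ℂ => max 1 ‖z‖) P.roots with hS
  have hfac : ∀ r ∈ S, (1 : ℝ) ≤ r := by
    intro r hr
    obtain ⟨z, _, rfl⟩ := Multiset.mem_map.mp hr
    exact le_max_left _ _
  have hprod1 : (1 : ℝ) ≤ S.prod := Multiset.one_le_prod hfac
  have hlc : (1 : ℝ) ≤ (pp.leadingCoeff.natAbs : ℝ) := by
    have : pp.leadingCoeff ≠ 0 := leadingCoeff_ne_zero.mpr hpp0
    exact_mod_cast Nat.one_le_iff_ne_zero.mpr (Int.natAbs_ne_zero.mpr this)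
  have hM1 : 1 ≤ mahlerMeasure lam := one_le_mul_of_one_le_of_one_le hlc hprod1
  have hMeq : mahlerMeasure lam = 1 := by
    unfold logHeight weilHeight at hh
    rw [Real.log_rpow (lt_of_lt_of_le one_pos hM1)] at hh
    have hdne : ((q.natDegree : ℝ))⁻¹ ≠ 0 :=
      inv_ne_zero (Nat.cast_ne_zero.mpr hd.ne')
    have hlog : Real.log (mahlerMeasure lam) = 0 := by
      rcases mul_eq_zero.mp hh with h | h
      · exact absurd h hdne
      · exact h
    rcases Real.log_eq_zero.mp hlog with h | h | h
    · exact absurd h (by positivity)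
    · exact h
    · linarith
  have hSprod : S.prod ≤ 1 := by
    have : S.prod ≤ (pp.leadingCoeff.natAbs : ℝ) * S.prod :=
      le_mul_of_one_le_left (le_trans one_pos.le hprod1) hlc
    calc S.prod ≤ (pp.leadingCoeff.natAbs : ℝ) * S.prod := this
    _ = mahlerMeasure lam := rfl
    _ = 1 := hMeq
  have hroots : ∀ z ∈ P.roots, ‖z‖ ≤ 1 := by
    intro z hz
    have hmem : max 1 ‖z‖ ∈ S := Multiset.mem_map_of_mem _ hz
    have herase : (1 : ℝ) ≤ (S.erase (max 1 ‖z‖)).prod :=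
      Multiset.one_le_prod fun r hr => hfac r (Multiset.mem_of_mem_erase hr)
    have hsingle : max 1 ‖z‖ ≤ S.prod := by
      rw [← Multiset.prod_erase hmem]
      exact le_mul_of_one_le_right (le_trans one_pos.le (le_max_left _ _)) herase
    exact le_trans (le_max_right _ _) (hsingle.trans hSprod)
  -- every complex root of q is a root of P
  have hroot_mem : ∀ z : ℂ, aeval z q = 0 → z ∈ P.roots := by
    intro z hz
    have hzp : aeval z p = 0 :=
      IsLocalization.integerNormalization_aeval_eq_zero (nonZeroDivisors ℤ) q hz
    have hc0 : ((p.content : ℂ)) ≠ 0 := by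
      exact_mod_cast (Polynomial.content_eq_zero_iff.not.mpr hp0)
    have hzpp : aeval z pp = 0 := by
      rw [p.eq_C_content_mul_primPart, map_mul, aeval_C] at hzp
      have : (algebraMap ℤ ℂ) p.content ≠ 0 := by
        simpa using hc0
      exact (mul_eq_zero.mp hzp).resolve_left this
    rw [Polynomial.mem_roots hP0]
    rw [hPdef]
    have : pp.map (Int.castRingHom ℂ) = pp.map (algebraMap ℤ ℂ) := by
      rw [algebraMap_int_eq]
    rw [this]
    rw [IsRoot.def, Polynomial.eval_map, ← aeval_def]
    exact hzpp
  -- set up the number field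
  have hFD : FiniteDimensional ℚ ℚ⟮lam⟯ := IntermediateField.adjoin.finiteDimensional hqi
  haveI : NumberField ℚ⟮lam⟯ := ⟨⟩
  set x : ℚ⟮lam⟯ := IntermediateField.AdjoinSimple.gen ℚ lam with hx
  have hxl : algebraMap ℚ⟮lam⟯ ℂ x = lam := rfl
  have hinj : Function.Injective (algebraMap ℚ⟮lam⟯ ℂ) := (algebraMap ℚ⟮lam⟯ ℂ).injective
  have hx0 : x ≠ 0 := by
    intro h
    apply h0
    rw [← hxl, h, map_zero]
  have hxi : IsIntegral ℤ x := by
    rw [← isIntegral_algebraMap_iff hinj, hxl]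
    exact hint
  have hmin : minpoly ℚ x = q := (minpoly.algebraMap_eq hinj x).symm
  have hφ : ∀ φ : ℚ⟮lam⟯ →+* ℂ, ‖φ x‖ ≤ 1 := by
    intro φ
    have hmem : φ x ∈ (minpoly ℚ x).rootSet ℂ := by
      rw [← NumberField.Embeddings.range_eval_eq_rootSet_minpoly ℚ⟮lam⟯ ℂ x]
      exact ⟨φ, rfl⟩
    have haev : aeval (φ x) q = 0 := by
      rw [← hmin]
      exact (Polynomial.mem_rootSet.mp hmem).2
    have := hroots _ (hroot_mem _ haev)
    simpa using this
  obtain ⟨n, hn, hxn⟩ := aux_pow_eq_one hx0 hxi hφ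
  refine ⟨n, hn, ?_⟩
  rw [← hxl, ← map_pow, hxn, map_one]
end
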